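/- arXiv:2402.06180 — 5 statements merged into one kernel-verified Lean document; each statement's English description precedes it below -/
import Mathlib

section
/- Suppose the transition assumption holds (x_i(1) = A x_i(0) + B u_i for all i = 1,…,N_d) and the controller assumption holds (u_i = −K x_i(0) for all i ≤ N'_d). If the algebraic Riccati equation holds, i.e. G1 = A^T P A − P + Q − K^T (R + B^T P B) K = 0 and G2 = B^T P A − (R + B^T P B) K = 0, then f_{i,j} = 0 for every i ∈ {1,…,N'_d} and every j ∈ {1,…,N_d}. (Theorem 1) -/
/-!
On the data points driven by the controller, `x_i(1) = (A - B K) x_i(0)`, so `f_{i,j}` is the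
bilinear form `x_i(0)ᵀ M x_j(0) + x_i(0)ᵀ N u_j` with `M = (A - B K)ᵀ P A + Q - P` and
`N = (A - B K)ᵀ P B - Kᵀ R`. Substituting `Bᵀ P A = (R + Bᵀ P B) K` turns `M` into `G1`,
and by the symmetry of `P` and `R` the matrix `N` is `G2ᵀ`; both vanish under the ARE.
-/

open Matrix

section ClosedLoop

variable {ι κ α : Type*} [Fintype ι] [Fintype κ] [CommRing α]
  (A P Q : Matrix ι ι α) (B : Matrix ι κ α) (K : Matrix κ ι α) (R : Matrix κ κ α)

theorem Matrix.dotProduct_transpose_mulVec_eq_mulVec_dotProduct (M : Matrix ι κ α)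
    (x : κ → α) (y : ι → α) : x ⬝ᵥ (Mᵀ *ᵥ y) = (M *ᵥ x) ⬝ᵥ y := by
  rw [dotProduct_transpose_mulVec, dotProduct_comm]

theorem add_mulVec_neg_feedback (a : ι → α) :
    A *ᵥ a + B *ᵥ -(K *ᵥ a) = (A - B * K) *ᵥ a := by
  rw [mulVec_neg, mulVec_mulVec, sub_mulVec, sub_eq_add_neg]

theorem closedLoop_cost_eq (a b : ι → α) (v : κ → α) :
    ((A - B * K) *ᵥ a) ⬝ᵥ (P *ᵥ (A *ᵥ b + B *ᵥ v)) + a ⬝ᵥ ((Q - P) *ᵥ b)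
        + (-(K *ᵥ a)) ⬝ᵥ (R *ᵥ v)
      = a ⬝ᵥ (((A - B * K)ᵀ * P * A + (Q - P)) *ᵥ b)
        + a ⬝ᵥ (((A - B * K)ᵀ * P * B - Kᵀ * R) *ᵥ v) := by
  simp only [add_mulVec, sub_mulVec, ← mulVec_mulVec, mulVec_add, dotProduct_add,
    dotProduct_sub, neg_dotProduct, dotProduct_transpose_mulVec_eq_mulVec_dotProduct]
  ring

theorem riccati_state_coeff_eq_zero
    (hG1 : Aᵀ * P * A - P + Q - Kᵀ * (R + Bᵀ * P * B) * K = 0)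
    (hG2 : Bᵀ * P * A - (R + Bᵀ * P * B) * K = 0) :
    (A - B * K)ᵀ * P * A + (Q - P) = 0 := by
  have hBPA : Bᵀ * P * A = (R + Bᵀ * P * B) * K := sub_eq_zero.mp hG2
  calc (A - B * K)ᵀ * P * A + (Q - P)
      = Aᵀ * P * A - P + Q - Kᵀ * (Bᵀ * P * A) := by
        simp only [transpose_sub, transpose_mul, sub_mul, Matrix.mul_assoc]
        abel
    _ = 0 := by rw [hBPA, ← Matrix.mul_assoc, hG1]

theorem riccati_input_coeff_eq_zero (hP : P.IsSymm) (hR : R.IsSymm)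
    (hG2 : Bᵀ * P * A - (R + Bᵀ * P * B) * K = 0) :
    (A - B * K)ᵀ * P * B - Kᵀ * R = 0 := by
  calc (A - B * K)ᵀ * P * B - Kᵀ * R = (Bᵀ * P * A - (R + Bᵀ * P * B) * K)ᵀ := by
        simp only [transpose_sub, transpose_mul, transpose_add, transpose_transpose, hP.eq,
          hR.eq, Matrix.sub_mul, Matrix.mul_add, Matrix.mul_assoc]
        abel
    _ = 0 := by rw [hG2, transpose_zero]

end ClosedLoop

theorem are_implies_estimation_general
    (n m Nd Nd' : ℕ)
    (A : Matrix (Fin n) (Fin n) ℝ) (B : Matrix (Fin n) (Fin m) ℝ)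
    (K : Matrix (Fin m) (Fin n) ℝ)
    (P Q : Matrix (Fin n) (Fin n) ℝ) (R : Matrix (Fin m) (Fin m) ℝ)
    (hP : P.IsSymm) (hR : R.IsSymm)
    (x0 x1 : Fin Nd → Fin n → ℝ) (u : Fin Nd → Fin m → ℝ)
    (htrans : ∀ i : Fin Nd, x1 i = A *ᵥ x0 i + B *ᵥ u i)
    (hctrl : ∀ i : Fin Nd, (i : ℕ) < Nd' → u i = -(K *ᵥ x0 i))
    (hG1 : Aᵀ * P * A - P + Q - Kᵀ * (R + Bᵀ * P * B) * K = 0)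
    (hG2 : Bᵀ * P * A - (R + Bᵀ * P * B) * K = 0) :
    ∀ i j : Fin Nd, (i : ℕ) < Nd' →
      x1 i ⬝ᵥ (P *ᵥ x1 j) + x0 i ⬝ᵥ ((Q - P) *ᵥ x0 j) + u i ⬝ᵥ (R *ᵥ u j) = 0 := by
  intro i j hi
  rw [htrans i, htrans j, hctrl i hi, add_mulVec_neg_feedback, closedLoop_cost_eq,
    riccati_state_coeff_eq_zero A P Q B K R hG1 hG2,
    riccati_input_coeff_eq_zero A P B K R hP hR hG2]
  simp

/-- **Theorem 1.** Under the transition assumption and the controller assumption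
(for the first `Nd'` data points), if the algebraic Riccati equation
`G1 = 0 ∧ G2 = 0` holds, then `f_{i,j} = 0` for all `i ≤ Nd'` and all `j ≤ Nd`. -/
theorem are_implies_estimation
    (n m Nd Nd' : ℕ) (hN : Nd' ≤ Nd)
    (A : Matrix (Fin n) (Fin n) ℝ) (B : Matrix (Fin n) (Fin m) ℝ)
    (K : Matrix (Fin m) (Fin n) ℝ)
    (P Q : Matrix (Fin n) (Fin n) ℝ) (R : Matrix (Fin m) (Fin m) ℝ)
    (hP : P.IsSymm) (hQ : Q.IsSymm) (hR : R.IsSymm)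
    (x0 x1 : Fin Nd → Fin n → ℝ) (u : Fin Nd → Fin m → ℝ)
    (htrans : ∀ i : Fin Nd, x1 i = A *ᵥ x0 i + B *ᵥ u i)
    (hctrl : ∀ i : Fin Nd, (i : ℕ) < Nd' → u i = -(K *ᵥ x0 i))
    (hG1 : Aᵀ * P * A - P + Q - Kᵀ * (R + Bᵀ * P * B) * K = 0)
    (hG2 : Bᵀ * P * A - (R + Bᵀ * P * B) * K = 0) :
    ∀ i j : Fin Nd, (i : ℕ) < Nd' →
      x1 i ⬝ᵥ (P *ᵥ x1 j) + x0 i ⬝ᵥ ((Q - P) *ᵥ x0 j) + u i ⬝ᵥ (R *ᵥ u j) = 0 :=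
  are_implies_estimation_general n m Nd Nd' A B K P Q R hP hR x0 x1 u htrans hctrl hG1 hG2
end

section
/- Suppose the transition assumption holds (x_i(1) = A x_i(0) + B u_i for all i = 1,…,N_d) and the controller assumption holds (u_i = −K x_i(0) for all i ≤ N'_d). Suppose moreover that the (n+m)×N_d matrix D whose j-th column is [x_j(0); u_j] has full row rank n+m, and that the n×N'_d matrix X'(0) whose i-th column is x_i(0) (i ≤ N'_d) has full row rank n. Then f_{i,j} = 0 for every i ∈ {1,…,N'_d} and j ∈ {1,…,N_d} if and only if the algebraic Riccati equation holds, i.e. G1 = 0 and G2 = 0. (Theorem 2) -/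
/-!
If `u_i = -K x_i(0)` and `x_i(1) = A x_i(0) + B u_i`, then `f_{i,j} = x_i(0)ᵀ M [x_j(0); u_j]`
for the single `n × (n + m)` matrix `M = [(A - BK)ᵀPA - P + Q | (A - BK)ᵀPB - KᵀR]`.
Hence the equations `f_{i,j} = 0` say exactly `X'(0)ᵀ M D = 0`, which, as `X'(0)` and `D` have
full row rank, is equivalent to `M = 0`. Finally, the right block of `M` transposes to `G2` and
`G1` is the left block plus `Kᵀ G2`, so `M = 0` is the Riccati equation.
-/

open Matrix

namespace Matrix

variable {𝕜 ι κ α : Type*} [Field 𝕜] [Fintype ι] [Fintype κ]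

theorem vecMul_injective_of_rank_eq_card {M : Matrix ι κ 𝕜} (h : M.rank = Fintype.card ι) :
    Function.Injective M.vecMul := by
  rw [vecMul_injective_iff, linearIndependent_iff_card_eq_finrank_span, ← h,
    rank_eq_finrank_span_row]
  rfl

theorem eq_zero_of_mul_eq_zero_of_rank_eq_card {N : Matrix α ι 𝕜} {M : Matrix ι κ 𝕜}
    (hM : M.rank = Fintype.card ι) (h : N * M = 0) : N = 0 := by
  funext a
  refine vecMul_injective_of_rank_eq_card hM ?_
  simp only [← mul_apply_eq_vecMul, h, Matrix.zero_mul]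

theorem eq_zero_of_transpose_mul_mul_eq_zero {β : Type*} [Fintype α] [Fintype β]
    {X : Matrix ι α 𝕜} {M : Matrix ι κ 𝕜} {D : Matrix κ β 𝕜}
    (hX : X.rank = Fintype.card ι) (hD : D.rank = Fintype.card κ) (h : Xᵀ * M * D = 0) :
    M = 0 := by
  have hMD : (M * D)ᵀ * X = 0 :=
    calc (M * D)ᵀ * X = (Xᵀ * M * D)ᵀ := by
          simp only [transpose_mul, transpose_transpose, Matrix.mul_assoc]
      _ = 0 := by rw [h, transpose_zero]
  exact eq_zero_of_mul_eq_zero_of_rank_eq_card hD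
    (transpose_eq_zero.mp (eq_zero_of_mul_eq_zero_of_rank_eq_card hX hMD))

end Matrix

section Riccati

variable {𝕜 ι κ : Type*} [CommRing 𝕜] [Fintype ι] [Fintype κ]
  (A : Matrix ι ι 𝕜) (B : Matrix ι κ 𝕜) (K : Matrix κ ι 𝕜) (P Q : Matrix ι ι 𝕜) (R : Matrix κ κ 𝕜)

def riccatiResidual : Matrix ι (ι ⊕ κ) 𝕜 :=
  fromCols ((A - B * K)ᵀ * P * A - P + Q) ((A - B * K)ᵀ * P * B - Kᵀ * R)

theorem quadratic_closedLoop_eq_dotProduct_riccatiResidual (x y : ι → 𝕜) (v : κ → 𝕜) :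
    (A *ᵥ x + B *ᵥ -(K *ᵥ x)) ⬝ᵥ (P *ᵥ (A *ᵥ y + B *ᵥ v)) + x ⬝ᵥ ((Q - P) *ᵥ y)
        + -(K *ᵥ x) ⬝ᵥ (R *ᵥ v) =
      x ⬝ᵥ (riccatiResidual A B K P Q R *ᵥ Sum.elim y v) := by
  rw [mulVec_neg, mulVec_mulVec, ← sub_eq_add_neg, ← sub_mulVec, neg_dotProduct,
    ← vecMul_transpose (A - B * K), ← vecMul_transpose K, ← dotProduct_mulVec,
    ← dotProduct_mulVec, riccatiResidual, fromCols_mulVec_sumElim]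
  simp only [mulVec_mulVec, mulVec_add, add_mulVec, sub_mulVec, dotProduct_add, dotProduct_sub,
    Matrix.mul_assoc]
  abel

variable {A B K P Q R}

theorem riccatiResidual_eq_zero_iff (hP : P.IsSymm) (hR : R.IsSymm) :
    riccatiResidual A B K P Q R = 0 ↔
      Aᵀ * P * A - P + Q - Kᵀ * (R + Bᵀ * P * B) * K = 0 ∧
        Bᵀ * P * A - (R + Bᵀ * P * B) * K = 0 := by
  have hT_transpose : ((A - B * K)ᵀ * P * B - Kᵀ * R)ᵀ = Bᵀ * P * A - (R + Bᵀ * P * B) * K := by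
    simp only [transpose_sub, transpose_mul, transpose_transpose, hP.eq, hR.eq, Matrix.mul_sub,
      Matrix.add_mul, Matrix.mul_assoc]
    abel
  have hG1_split : Aᵀ * P * A - P + Q - Kᵀ * (R + Bᵀ * P * B) * K =
      (A - B * K)ᵀ * P * A - P + Q + Kᵀ * (Bᵀ * P * A - (R + Bᵀ * P * B) * K) := by
    simp only [transpose_sub, transpose_mul, Matrix.mul_sub, Matrix.sub_mul, Matrix.mul_assoc]
    abel
  have hT : (A - B * K)ᵀ * P * B - Kᵀ * R = 0 ↔ Bᵀ * P * A - (R + Bᵀ * P * B) * K = 0 := by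
    rw [← transpose_eq_zero, hT_transpose]
  rw [riccatiResidual, ← fromCols_zero, fromCols_inj.eq_iff, hT, hG1_split]
  constructor
  · rintro ⟨hS, hG2⟩
    exact ⟨by rw [hS, hG2, Matrix.mul_zero, add_zero], hG2⟩
  · rintro ⟨hG1, hG2⟩
    rw [hG2, Matrix.mul_zero, add_zero] at hG1
    exact ⟨hG1, hG2⟩

end Riccati

theorem estimation_equiv_are_general
    (n m Nd Nd' : ℕ) (hN : Nd' ≤ Nd)
    (A : Matrix (Fin n) (Fin n) ℝ) (B : Matrix (Fin n) (Fin m) ℝ)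
    (K : Matrix (Fin m) (Fin n) ℝ)
    (P Q : Matrix (Fin n) (Fin n) ℝ) (R : Matrix (Fin m) (Fin m) ℝ)
    (hP : P.IsSymm) (hR : R.IsSymm)
    (x0 x1 : Fin Nd → Fin n → ℝ) (u : Fin Nd → Fin m → ℝ)
    (htrans : ∀ i : Fin Nd, x1 i = A *ᵥ x0 i + B *ᵥ u i)
    (hctrl : ∀ i : Fin Nd, (i : ℕ) < Nd' → u i = -(K *ᵥ x0 i))
    (D : Matrix (Fin n ⊕ Fin m) (Fin Nd) ℝ)
    (hD : D = Matrix.of fun p j => Sum.elim (x0 j) (u j) p)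
    (X0' : Matrix (Fin n) (Fin Nd') ℝ)
    (hX0' : X0' = Matrix.of fun k i => x0 (Fin.castLE hN i) k)
    (hrankD : D.rank = n + m)
    (hrankX0' : X0'.rank = n) :
    (∀ i j : Fin Nd, (i : ℕ) < Nd' →
        x1 i ⬝ᵥ (P *ᵥ x1 j) + x0 i ⬝ᵥ ((Q - P) *ᵥ x0 j) + u i ⬝ᵥ (R *ᵥ u j) = 0)
      ↔ (Aᵀ * P * A - P + Q - Kᵀ * (R + Bᵀ * P * B) * K = 0 ∧
          Bᵀ * P * A - (R + Bᵀ * P * B) * K = 0) := by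
  rw [← riccatiResidual_eq_zero_iff hP hR]
  set M := riccatiResidual A B K P Q R
  have hf : ∀ i j : Fin Nd, (i : ℕ) < Nd' →
      x1 i ⬝ᵥ (P *ᵥ x1 j) + x0 i ⬝ᵥ ((Q - P) *ᵥ x0 j) + u i ⬝ᵥ (R *ᵥ u j) =
        x0 i ⬝ᵥ (M *ᵥ Sum.elim (x0 j) (u j)) := by
    intro i j hi
    rw [htrans i, htrans j, hctrl i hi]
    exact quadratic_closedLoop_eq_dotProduct_riccatiResidual A B K P Q R _ _ _
  have hentry : ∀ i j,
      (X0'ᵀ * M * D) i j = x0 (Fin.castLE hN i) ⬝ᵥ (M *ᵥ Sum.elim (x0 j) (u j)) := by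
    intro i j
    subst hD hX0'
    rw [Matrix.mul_assoc]
    simp only [mul_apply, dotProduct, mulVec, transpose_apply, of_apply]
  constructor
  · intro h
    refine eq_zero_of_transpose_mul_mul_eq_zero (by simpa using hrankX0') (by simpa using hrankD) ?_
    ext i j
    rw [hentry, ← hf _ _ i.isLt, h _ _ i.isLt, Matrix.zero_apply]
  · intro h i j hi
    rw [hf i j hi, h, zero_mulVec, dotProduct_zero]

/-- **Theorem 2.** Under the transition and controller assumptions, if the data matrix `D`
(columns `[x_j(0); u_j]`) has full row rank `n + m` and the matrix `X'(0)`
(columns `x_i(0)`, `i ≤ Nd'`) has full row rank `n`, then the estimated equation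
`f_{i,j} = 0` (for all `i ≤ Nd'`, `j ≤ Nd`) is equivalent to the algebraic Riccati
equation `G1 = 0 ∧ G2 = 0`. -/
theorem estimation_equiv_are
    (n m Nd Nd' : ℕ) (hN : Nd' ≤ Nd)
    (A : Matrix (Fin n) (Fin n) ℝ) (B : Matrix (Fin n) (Fin m) ℝ)
    (K : Matrix (Fin m) (Fin n) ℝ)
    (P Q : Matrix (Fin n) (Fin n) ℝ) (R : Matrix (Fin m) (Fin m) ℝ)
    (hP : P.IsSymm) (hQ : Q.IsSymm) (hR : R.IsSymm)
    (x0 x1 : Fin Nd → Fin n → ℝ) (u : Fin Nd → Fin m → ℝ)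
    (htrans : ∀ i : Fin Nd, x1 i = A *ᵥ x0 i + B *ᵥ u i)
    (hctrl : ∀ i : Fin Nd, (i : ℕ) < Nd' → u i = -(K *ᵥ x0 i))
    (D : Matrix (Fin n ⊕ Fin m) (Fin Nd) ℝ)
    (hD : D = Matrix.of fun p j => Sum.elim (x0 j) (u j) p)
    (X0' : Matrix (Fin n) (Fin Nd') ℝ)
    (hX0' : X0' = Matrix.of fun k i => x0 (Fin.castLE hN i) k)
    (hrankD : D.rank = n + m)
    (hrankX0' : X0'.rank = n) :
    (∀ i j : Fin Nd, (i : ℕ) < Nd' →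
        x1 i ⬝ᵥ (P *ᵥ x1 j) + x0 i ⬝ᵥ ((Q - P) *ᵥ x0 j) + u i ⬝ᵥ (R *ᵥ u j) = 0)
      ↔ (Aᵀ * P * A - P + Q - Kᵀ * (R + Bᵀ * P * B) * K = 0 ∧
          Bᵀ * P * A - (R + Bᵀ * P * B) * K = 0) :=
  estimation_equiv_are_general n m Nd Nd' hN A B K P Q R hP hR x0 x1 u htrans hctrl D hD X0' hX0'
    hrankD hrankX0'
end

section
/- Suppose the transition assumption holds (x_i(1) = A x_i(0) + B u_i for all i = 1,…,N_d) and the controller assumption holds (u_i = −K x_i(0) for all i ≤ N'_d). For each i let d_i = [x_i(0); u_i] ∈ ℝ^{n+m}. Suppose there exist k ∈ {1,…,N'_d} and real numbers c_i (i ∈ {1,…,N'_d}\{k}) such that d_k = Σ_{i≠k, i≤N'_d} c_i d_i. Then for every j ∈ {1,…,N_d} with j ≠ k one has f_{k,j} = Σ_{i≠k, i≤N'_d} c_i f_{i,j}, and f_{k,k} = Σ_{i≠k, i≤N'_d} Σ_{j≠k, j≤N'_d} c_i c_j f_{i,j}. (Lemma 1) -/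
/-!
With `C = [A B]`, the transition law gives `x_i(1) = C d_i`, so
`f_{i,j} = d_iᵀ (Cᵀ P C + diag(Q - P, R)) d_j` is the value at `(d_i, d_j)` of one fixed
bilinear form. A linear relation among the data vectors `d_i` is therefore inherited by the
`f_{i,j}`: linearly in the first argument, and bilinearly on the diagonal.
-/

open Matrix Finset

section BilinearCombination

variable {R M ι : Type*} [CommSemiring R] [AddCommMonoid M] [Module R M]
  (β : M →ₗ[R] M →ₗ[R] R) (s : Finset ι) (c : ι → R) (v : ι → M)

theorem LinearMap.sum_smul_apply₂ (w : M) :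
    β (∑ i ∈ s, c i • v i) w = ∑ i ∈ s, c i * β (v i) w := by
  simp only [LinearMap.map_sum₂, LinearMap.map_smul₂, smul_eq_mul]

theorem LinearMap.sum_smul_apply₂_sum_smul :
    β (∑ i ∈ s, c i • v i) (∑ j ∈ s, c j • v j) =
      ∑ i ∈ s, ∑ j ∈ s, c i * c j * β (v i) (v j) := by
  rw [LinearMap.sum_smul_apply₂]
  refine sum_congr rfl fun i _ => ?_
  rw [map_sum, mul_sum]
  exact sum_congr rfl fun j _ => by rw [map_smul, smul_eq_mul]; ring

end BilinearCombination

namespace Matrix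

variable {α n m : Type*} [CommRing α] [Fintype n] [Fintype m]

def dataGram (A : Matrix n n α) (B : Matrix n m α) (P Q : Matrix n n α) (R : Matrix m m α) :
    Matrix (n ⊕ m) (n ⊕ m) α :=
  (fromCols A B)ᵀ * P * fromCols A B + fromBlocks (Q - P) 0 0 R

theorem sumElim_dotProduct_dataGram_mulVec_sumElim (A : Matrix n n α) (B : Matrix n m α)
    (P Q : Matrix n n α) (R : Matrix m m α) (x y : n → α) (u w : m → α) :
    Sum.elim x u ⬝ᵥ (dataGram A B P Q R *ᵥ Sum.elim y w) =
      (A *ᵥ x + B *ᵥ u) ⬝ᵥ (P *ᵥ (A *ᵥ y + B *ᵥ w)) + x ⬝ᵥ ((Q - P) *ᵥ y) +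
        u ⬝ᵥ (R *ᵥ w) := by
  rw [dataGram, add_mulVec, dotProduct_add, Matrix.mul_assoc, ← mulVec_mulVec, ← mulVec_mulVec,
    dotProduct_mulVec, vecMul_transpose, fromCols_mulVec_sumElim, fromCols_mulVec_sumElim,
    fromBlocks_mulVec, sumElim_dotProduct_sumElim]
  simp only [Sum.elim_comp_inl, Sum.elim_comp_inr, zero_mulVec, add_zero, zero_add]
  ring

end Matrix

theorem lemma1_dependent_data_general
    (n m Nd Nd' : ℕ)
    (A : Matrix (Fin n) (Fin n) ℝ) (B : Matrix (Fin n) (Fin m) ℝ)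
    (P Q : Matrix (Fin n) (Fin n) ℝ) (R : Matrix (Fin m) (Fin m) ℝ)
    (x0 x1 : Fin Nd → Fin n → ℝ) (u : Fin Nd → Fin m → ℝ)
    (htrans : ∀ i : Fin Nd, x1 i = A *ᵥ x0 i + B *ᵥ u i)
    (f : Fin Nd → Fin Nd → ℝ)
    (hf : ∀ i j : Fin Nd,
      f i j = x1 i ⬝ᵥ (P *ᵥ x1 j) + x0 i ⬝ᵥ ((Q - P) *ᵥ x0 j) + u i ⬝ᵥ (R *ᵥ u j))
    (d : Fin Nd → (Fin n ⊕ Fin m) → ℝ)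
    (hd : ∀ i : Fin Nd, d i = Sum.elim (x0 i) (u i))
    (k : Fin Nd)
    (c : Fin Nd → ℝ)
    (hcomb : d k = ∑ i ∈ univ.filter (fun i : Fin Nd => (i : ℕ) < Nd' ∧ i ≠ k),
        c i • d i) :
    (∀ j : Fin Nd, j ≠ k →
        f k j = ∑ i ∈ univ.filter (fun i : Fin Nd => (i : ℕ) < Nd' ∧ i ≠ k), c i * f i j) ∧
      f k k = ∑ i ∈ univ.filter (fun i : Fin Nd => (i : ℕ) < Nd' ∧ i ≠ k),
          ∑ j ∈ univ.filter (fun j : Fin Nd => (j : ℕ) < Nd' ∧ j ≠ k),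
            c i * c j * f i j := by
  set β : (Fin n ⊕ Fin m → ℝ) →ₗ[ℝ] (Fin n ⊕ Fin m → ℝ) →ₗ[ℝ] ℝ :=
    toLinearMap₂' ℝ (dataGram A B P Q R)
  have hf_eq : ∀ i j, f i j = β (d i) (d j) := fun i j => by
    rw [hf, toLinearMap₂'_apply', hd, hd, htrans, htrans,
      sumElim_dotProduct_dataGram_mulVec_sumElim]
  refine ⟨fun j _ => ?_, ?_⟩
  · simp only [hf_eq, hcomb, LinearMap.sum_smul_apply₂]
  · simp only [hf_eq, hcomb, LinearMap.sum_smul_apply₂_sum_smul]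

/-- **Lemma 1.** Under the transition and controller assumptions, if the data vector
`d_k = [x_k(0); u_k]` (with `k ≤ Nd'`) is a linear combination of the other data vectors
`d_i` (`i ≤ Nd'`, `i ≠ k`), then the equations obtained from `d_k` are corresponding
linear combinations of the equations obtained from the other data vectors. -/
theorem lemma1_dependent_data
    (n m Nd Nd' : ℕ) (hN : Nd' ≤ Nd)
    (A : Matrix (Fin n) (Fin n) ℝ) (B : Matrix (Fin n) (Fin m) ℝ)
    (K : Matrix (Fin m) (Fin n) ℝ)
    (P Q : Matrix (Fin n) (Fin n) ℝ) (R : Matrix (Fin m) (Fin m) ℝ)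
    (hP : P.IsSymm) (hQ : Q.IsSymm) (hR : R.IsSymm)
    (x0 x1 : Fin Nd → Fin n → ℝ) (u : Fin Nd → Fin m → ℝ)
    (htrans : ∀ i : Fin Nd, x1 i = A *ᵥ x0 i + B *ᵥ u i)
    (hctrl : ∀ i : Fin Nd, (i : ℕ) < Nd' → u i = -(K *ᵥ x0 i))
    (f : Fin Nd → Fin Nd → ℝ)
    (hf : ∀ i j : Fin Nd,
      f i j = x1 i ⬝ᵥ (P *ᵥ x1 j) + x0 i ⬝ᵥ ((Q - P) *ᵥ x0 j) + u i ⬝ᵥ (R *ᵥ u j))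
    (d : Fin Nd → (Fin n ⊕ Fin m) → ℝ)
    (hd : ∀ i : Fin Nd, d i = Sum.elim (x0 i) (u i))
    (k : Fin Nd) (hk : (k : ℕ) < Nd')
    (c : Fin Nd → ℝ)
    (hcomb : d k = ∑ i ∈ univ.filter (fun i : Fin Nd => (i : ℕ) < Nd' ∧ i ≠ k),
        c i • d i) :
    (∀ j : Fin Nd, j ≠ k →
        f k j = ∑ i ∈ univ.filter (fun i : Fin Nd => (i : ℕ) < Nd' ∧ i ≠ k), c i * f i j) ∧
      f k k = ∑ i ∈ univ.filter (fun i : Fin Nd => (i : ℕ) < Nd' ∧ i ≠ k),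
          ∑ j ∈ univ.filter (fun j : Fin Nd => (j : ℕ) < Nd' ∧ j ≠ k),
            c i * c j * f i j :=
  lemma1_dependent_data_general n m Nd Nd' A B P Q R x0 x1 u htrans f hf d hd k c hcomb
end

section
/- Suppose the algebraic Riccati equation holds (G1 = 0 and G2 = 0), x_i(1) = A x_i(0) + B u_i, x_j(1) = A x_j(0) + B u_j, and u_i = −K x_i(0). Let Δu_j = u_j + K x_j(0). Then f_{i,j} = x_i(0)^T (A^T P B − K^T (B^T P B + R)) Δu_j; in particular, since K satisfies (R + B^T P B) K = B^T P A under the ARE, f_{i,j} = 0. (Identity in the proof of Theorem 1') -/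
/-!
Substituting the feedback law, both successor states are driven by the closed-loop matrix
`A - B K`: `x_i(1) = (A - B K) x_i(0)` and `x_j(1) = (A - B K) x_j(0) + B Δu_j`. Expanding
`f_{i,j}` then splits it into a bilinear term in `(x_i(0), x_j(0))`, whose matrix
`(A - B K)ᵀ P (A - B K) + Q - P + Kᵀ R K` equals `G1 - Kᵀ G2 - G2ᵀ K`, and a bilinear term in
`(x_i(0), Δu_j)` with matrix `Aᵀ P B - Kᵀ (Bᵀ P B + R)`, which is `G2ᵀ` when `P` and `R` are
symmetric. Under the ARE the first term vanishes, giving the identity, and so does the second.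
-/

open Matrix

namespace Matrix

variable {ι κ α : Type*} [Fintype ι] [Fintype κ] [CommRing α]

theorem mulVec_dotProduct (M : Matrix ι κ α) (x : κ → α) (w : ι → α) :
    (M *ᵥ x) ⬝ᵥ w = x ⬝ᵥ (Mᵀ *ᵥ w) := by
  rw [dotProduct_comm, dotProduct_transpose_mulVec]

variable (A : Matrix ι ι α) (B : Matrix ι κ α) (K : Matrix κ ι α)
  (P Q : Matrix ι ι α) (R : Matrix κ κ α)

theorem mulVec_add_mulVec_eq_closedLoop (x : ι → α) (u : κ → α) :
    A *ᵥ x + B *ᵥ u = (A - B * K) *ᵥ x + B *ᵥ (u + K *ᵥ x) := by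
  rw [sub_mulVec, mulVec_add, mulVec_mulVec]
  abel

theorem closedLoop_stageCost_eq_riccati :
    (A - B * K)ᵀ * P * (A - B * K) + (Q - P) + Kᵀ * R * K =
      (Aᵀ * P * A - P + Q - Kᵀ * (R + Bᵀ * P * B) * K)
        - Kᵀ * (Bᵀ * P * A - (R + Bᵀ * P * B) * K)
        - (Aᵀ * P * B - Kᵀ * (Bᵀ * P * B + R)) * K := by
  simp only [transpose_sub, transpose_mul, Matrix.mul_sub, Matrix.sub_mul, Matrix.mul_add,
    Matrix.add_mul, Matrix.mul_assoc]
  abel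

theorem transpose_riccati_gainResidual (hP : P.IsSymm) (hR : R.IsSymm) :
    (Bᵀ * P * A - (R + Bᵀ * P * B) * K)ᵀ = Aᵀ * P * B - Kᵀ * (Bᵀ * P * B + R) := by
  simp only [transpose_sub, transpose_mul, transpose_add, transpose_transpose, hP.eq, hR.eq,
    Matrix.mul_assoc, add_comm R]

theorem closedLoop_crossCost_eq (x y : ι → α) (v : κ → α) :
    ((A - B * K) *ᵥ x) ⬝ᵥ (P *ᵥ ((A - B * K) *ᵥ y + B *ᵥ v)) + x ⬝ᵥ ((Q - P) *ᵥ y)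
        + -(K *ᵥ x) ⬝ᵥ (R *ᵥ (v - K *ᵥ y)) =
      x ⬝ᵥ (((A - B * K)ᵀ * P * (A - B * K) + (Q - P) + Kᵀ * R * K) *ᵥ y)
        + x ⬝ᵥ ((Aᵀ * P * B - Kᵀ * (Bᵀ * P * B + R)) *ᵥ v) := by
  rw [mulVec_dotProduct, neg_dotProduct, mulVec_dotProduct, ← dotProduct_neg, ← dotProduct_add,
    ← dotProduct_add, ← dotProduct_add]
  congr 1
  simp only [mulVec_add, mulVec_sub, add_mulVec, sub_mulVec, mulVec_mulVec,
    transpose_sub, transpose_mul, Matrix.mul_sub, Matrix.sub_mul, Matrix.mul_add,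
    Matrix.mul_assoc]
  abel

end Matrix

theorem theorem1'_identity_general
    (n m : ℕ)
    (A : Matrix (Fin n) (Fin n) ℝ) (B : Matrix (Fin n) (Fin m) ℝ)
    (K : Matrix (Fin m) (Fin n) ℝ)
    (P Q : Matrix (Fin n) (Fin n) ℝ) (R : Matrix (Fin m) (Fin m) ℝ)
    (hP : P.IsSymm) (hR : R.IsSymm)
    (hG1 : Aᵀ * P * A - P + Q - Kᵀ * (R + Bᵀ * P * B) * K = 0)
    (hG2 : Bᵀ * P * A - (R + Bᵀ * P * B) * K = 0)
    (xi0 xi1 xj0 xj1 : Fin n → ℝ) (ui uj : Fin m → ℝ)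
    (hxi : xi1 = A *ᵥ xi0 + B *ᵥ ui)
    (hxj : xj1 = A *ᵥ xj0 + B *ᵥ uj)
    (hui : ui = -(K *ᵥ xi0))
    (Δuj : Fin m → ℝ)
    (hΔuj : Δuj = uj + K *ᵥ xj0) :
    xi1 ⬝ᵥ (P *ᵥ xj1) + xi0 ⬝ᵥ ((Q - P) *ᵥ xj0) + ui ⬝ᵥ (R *ᵥ uj) =
        xi0 ⬝ᵥ ((Aᵀ * P * B - Kᵀ * (Bᵀ * P * B + R)) *ᵥ Δuj) ∧
      xi1 ⬝ᵥ (P *ᵥ xj1) + xi0 ⬝ᵥ ((Q - P) *ᵥ xj0) + ui ⬝ᵥ (R *ᵥ uj) = 0 := by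
  have hG2_transpose : Aᵀ * P * B - Kᵀ * (Bᵀ * P * B + R) = 0 := by
    rw [← transpose_riccati_gainResidual A B K P R hP hR, hG2, transpose_zero]
  have hxi' : xi1 = (A - B * K) *ᵥ xi0 := by
    rw [hxi, mulVec_add_mulVec_eq_closedLoop A B K, hui, neg_add_cancel, mulVec_zero, add_zero]
  have hxj' : xj1 = (A - B * K) *ᵥ xj0 + B *ᵥ Δuj := by
    rw [hxj, mulVec_add_mulVec_eq_closedLoop A B K, hΔuj]
  have huj : uj = Δuj - K *ᵥ xj0 := eq_sub_of_add_eq hΔuj.symm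
  have identity : xi1 ⬝ᵥ (P *ᵥ xj1) + xi0 ⬝ᵥ ((Q - P) *ᵥ xj0) + ui ⬝ᵥ (R *ᵥ uj) =
      xi0 ⬝ᵥ ((Aᵀ * P * B - Kᵀ * (Bᵀ * P * B + R)) *ᵥ Δuj) := by
    rw [hxi', hxj', hui, huj, closedLoop_crossCost_eq, closedLoop_stageCost_eq_riccati, hG1, hG2,
      hG2_transpose, Matrix.mul_zero, Matrix.zero_mul, sub_zero, sub_zero, zero_mulVec, dotProduct_zero,
      zero_add]
  refine ⟨identity, ?_⟩
  rw [identity, hG2_transpose, zero_mulVec, dotProduct_zero]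

/-- Identity in the proof of Theorem 1': under the ARE and the transition assumptions,
with `u_i = -K x_i(0)` and `Δu_j = u_j + K x_j(0)`, one has
`f_{i,j} = x_i(0)ᵀ (Aᵀ P B - Kᵀ (Bᵀ P B + R)) Δu_j`; in particular `f_{i,j} = 0`. -/
theorem theorem1'_identity
    (n m : ℕ)
    (A : Matrix (Fin n) (Fin n) ℝ) (B : Matrix (Fin n) (Fin m) ℝ)
    (K : Matrix (Fin m) (Fin n) ℝ)
    (P Q : Matrix (Fin n) (Fin n) ℝ) (R : Matrix (Fin m) (Fin m) ℝ)
    (hP : P.IsSymm) (hQ : Q.IsSymm) (hR : R.IsSymm)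
    (hG1 : Aᵀ * P * A - P + Q - Kᵀ * (R + Bᵀ * P * B) * K = 0)
    (hG2 : Bᵀ * P * A - (R + Bᵀ * P * B) * K = 0)
    (xi0 xi1 xj0 xj1 : Fin n → ℝ) (ui uj : Fin m → ℝ)
    (hxi : xi1 = A *ᵥ xi0 + B *ᵥ ui)
    (hxj : xj1 = A *ᵥ xj0 + B *ᵥ uj)
    (hui : ui = -(K *ᵥ xi0))
    (Δuj : Fin m → ℝ)
    (hΔuj : Δuj = uj + K *ᵥ xj0) :
    xi1 ⬝ᵥ (P *ᵥ xj1) + xi0 ⬝ᵥ ((Q - P) *ᵥ xj0) + ui ⬝ᵥ (R *ᵥ uj) =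
        xi0 ⬝ᵥ ((Aᵀ * P * B - Kᵀ * (Bᵀ * P * B + R)) *ᵥ Δuj) ∧
      xi1 ⬝ᵥ (P *ᵥ xj1) + xi0 ⬝ᵥ ((Q - P) *ᵥ xj0) + ui ⬝ᵥ (R *ᵥ uj) = 0 :=
  theorem1'_identity_general n m A B K P Q R hP hR hG1 hG2 xi0 xi1 xj0 xj1 ui uj hxi hxj hui Δuj
    hΔuj
end

section
/- Suppose the transition assumption holds (x_i(1) = A x_i(0) + B u_i for all i = 1,…,N_d) and the controller assumption holds (u_i = −K x_i(0) for all i ≤ N'_d). Let D be the (n+m)×N_d matrix whose j-th column is [x_j(0); u_j], let X'(0) be the n×N'_d matrix whose i-th column is x_i(0) (i ≤ N'_d), and let U' be the m×N'_d matrix whose i-th column is u_i (i ≤ N'_d). Then the N'_d×N_d matrix F with entries F_{i,j} = f_{i,j} satisfies F = [X'(0); U']^T M D, where M is the (n+m)×(n+m) block matrix with blocks G1, G2^T in the first block row and G2, 0 in the second block row. (Equation (19)) -/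
/-!
Writing `z = [x; u]`, the transition `x(1) = A x(0) + B u` turns `f_{i,j}` into the bilinear form
`z_iᵀ H z_j` of the matrix `H = [[AᵀPA - P + Q, AᵀPB], [BᵀPA, R + BᵀPB]]`. For the first `N'_d`
samples `z_i = [I; -K] x_i(0)`, and the block row `[I, -Kᵀ] H` coincides with `[I, -Kᵀ] M`;
this is exactly how `G1` and `G2` arise.
-/

open Matrix

section Bellman

variable {α : Type*} [CommRing α] {n m : Type*} [Fintype n] [Fintype m]

theorem mul_mul_apply_eq_dotProduct {k l p q : Type*} [Fintype l] [Fintype p]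
    (A : Matrix k l α) (B : Matrix l p α) (C : Matrix p q α) (i : k) (j : q) :
    (A * B * C) i j = A i ⬝ᵥ (B *ᵥ Cᵀ j) := by
  rw [Matrix.mul_assoc]
  rfl

def bellmanMatrix (A : Matrix n n α) (B : Matrix n m α) (P Q : Matrix n n α)
    (R : Matrix m m α) : Matrix (n ⊕ m) (n ⊕ m) α :=
  fromBlocks (Aᵀ * P * A - P + Q) (Aᵀ * P * B) (Bᵀ * P * A) (R + Bᵀ * P * B)

def closedLoopBellmanMatrix (A : Matrix n n α) (B : Matrix n m α) (K : Matrix m n α)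
    (P Q : Matrix n n α) (R : Matrix m m α) : Matrix (n ⊕ m) (n ⊕ m) α :=
  fromBlocks (Aᵀ * P * A - P + Q - Kᵀ * (R + Bᵀ * P * B) * K)
    (Bᵀ * P * A - (R + Bᵀ * P * B) * K)ᵀ (Bᵀ * P * A - (R + Bᵀ * P * B) * K) 0

theorem sumElim_dotProduct_bellmanMatrix_mulVec_sumElim (A : Matrix n n α) (B : Matrix n m α)
    (P Q : Matrix n n α) (R : Matrix m m α) (x y : n → α) (u v : m → α) :
    Sum.elim x u ⬝ᵥ (bellmanMatrix A B P Q R *ᵥ Sum.elim y v) =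
      (A *ᵥ x + B *ᵥ u) ⬝ᵥ (P *ᵥ (A *ᵥ y + B *ᵥ v)) + x ⬝ᵥ ((Q - P) *ᵥ y) +
        u ⬝ᵥ (R *ᵥ v) := by
  simp only [bellmanMatrix, fromBlocks_mulVec, sumElim_dotProduct_sumElim, Sum.elim_comp_inl,
    Sum.elim_comp_inr, add_mulVec, sub_mulVec, ← mulVec_mulVec, mulVec_add, dotProduct_add,
    add_dotProduct, dotProduct_sub, dotProduct_mulVec _ Aᵀ, dotProduct_mulVec _ Bᵀ,
    vecMul_transpose]
  ring

variable [DecidableEq n]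

theorem transpose_fromRows_one_neg_mul_bellmanMatrix (A : Matrix n n α) (B : Matrix n m α)
    (K : Matrix m n α) (P Q : Matrix n n α) (R : Matrix m m α) (hP : P.IsSymm)
    (hR : R.IsSymm) :
    (fromRows (1 : Matrix n n α) (-K))ᵀ * bellmanMatrix A B P Q R =
      (fromRows (1 : Matrix n n α) (-K))ᵀ * closedLoopBellmanMatrix A B K P Q R := by
  rw [bellmanMatrix, closedLoopBellmanMatrix, transpose_fromRows, fromCols_mul_fromBlocks,
    fromCols_mul_fromBlocks]
  simp only [transpose_one, transpose_neg, transpose_sub, transpose_mul, transpose_add,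
    transpose_transpose, hP.eq, hR.eq]
  congr 1 <;>
    simp only [Matrix.one_mul, Matrix.neg_mul, Matrix.mul_add, Matrix.mul_sub, Matrix.add_mul,
      Matrix.mul_zero, Matrix.mul_assoc] <;>
    abel

theorem sumElim_neg_mulVec_dotProduct_bellmanMatrix_mulVec (A : Matrix n n α)
    (B : Matrix n m α) (K : Matrix m n α) (P Q : Matrix n n α) (R : Matrix m m α)
    (hP : P.IsSymm) (hR : R.IsSymm) (x : n → α) (w : n ⊕ m → α) :
    Sum.elim x (-(K *ᵥ x)) ⬝ᵥ (bellmanMatrix A B P Q R *ᵥ w) =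
      Sum.elim x (-(K *ᵥ x)) ⬝ᵥ (closedLoopBellmanMatrix A B K P Q R *ᵥ w) := by
  have hx : Sum.elim x (-(K *ᵥ x)) = x ᵥ* (fromRows (1 : Matrix n n α) (-K))ᵀ := by
    rw [vecMul_transpose, fromRows_mulVec, one_mulVec, neg_mulVec]
  rw [hx, ← dotProduct_mulVec, ← dotProduct_mulVec, mulVec_mulVec, mulVec_mulVec,
    transpose_fromRows_one_neg_mul_bellmanMatrix A B K P Q R hP hR]

end Bellman

theorem F_factorization_general
    (n m Nd Nd' : ℕ) (hN : Nd' ≤ Nd)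
    (A : Matrix (Fin n) (Fin n) ℝ) (B : Matrix (Fin n) (Fin m) ℝ)
    (K : Matrix (Fin m) (Fin n) ℝ)
    (P Q : Matrix (Fin n) (Fin n) ℝ) (R : Matrix (Fin m) (Fin m) ℝ)
    (hP : P.IsSymm) (hR : R.IsSymm)
    (x0 x1 : Fin Nd → Fin n → ℝ) (u : Fin Nd → Fin m → ℝ)
    (htrans : ∀ i : Fin Nd, x1 i = A *ᵥ x0 i + B *ᵥ u i)
    (hctrl : ∀ i : Fin Nd, (i : ℕ) < Nd' → u i = -(K *ᵥ x0 i))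
    (F : Matrix (Fin Nd') (Fin Nd) ℝ)
    (hF : F = Matrix.of fun i j =>
      x1 (Fin.castLE hN i) ⬝ᵥ (P *ᵥ x1 j) +
        x0 (Fin.castLE hN i) ⬝ᵥ ((Q - P) *ᵥ x0 j) +
        u (Fin.castLE hN i) ⬝ᵥ (R *ᵥ u j))
    (D : Matrix (Fin n ⊕ Fin m) (Fin Nd) ℝ)
    (hD : D = Matrix.of fun p j => Sum.elim (x0 j) (u j) p)
    (X0' : Matrix (Fin n) (Fin Nd') ℝ)
    (hX0' : X0' = Matrix.of fun k i => x0 (Fin.castLE hN i) k)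
    (U' : Matrix (Fin m) (Fin Nd') ℝ)
    (hU' : U' = Matrix.of fun k i => u (Fin.castLE hN i) k)
    (G1 : Matrix (Fin n) (Fin n) ℝ) (G2 : Matrix (Fin m) (Fin n) ℝ)
    (hG1 : G1 = Aᵀ * P * A - P + Q - Kᵀ * (R + Bᵀ * P * B) * K)
    (hG2 : G2 = Bᵀ * P * A - (R + Bᵀ * P * B) * K) :
    F = (Matrix.fromRows X0' U')ᵀ * Matrix.fromBlocks G1 G2ᵀ G2 0 * D := by
  subst hF hD hX0' hU' hG1 hG2
  ext i j
  have hi : u (Fin.castLE hN i) = -(K *ᵥ x0 (Fin.castLE hN i)) := hctrl _ i.isLt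
  have hrow : (fromRows (of fun k i => x0 (Fin.castLE hN i) k)
      (of fun k i => u (Fin.castLE hN i) k))ᵀ i =
        Sum.elim (x0 (Fin.castLE hN i)) (-(K *ᵥ x0 (Fin.castLE hN i))) := by
    rw [← hi]
    ext (k | k) <;> rfl
  have hcol : (of fun p j => Sum.elim (x0 j) (u j) p)ᵀ j = Sum.elim (x0 j) (u j) := rfl
  rw [mul_mul_apply_eq_dotProduct, hrow, hcol]
  change _ = _ ⬝ᵥ (closedLoopBellmanMatrix A B K P Q R *ᵥ _)
  rw [← sumElim_neg_mulVec_dotProduct_bellmanMatrix_mulVec A B K P Q R hP hR, ← hi,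
    sumElim_dotProduct_bellmanMatrix_mulVec_sumElim, of_apply, htrans, htrans]

/-- Equation (19): under the transition and controller assumptions, the matrix `F` of
the values `f_{i,j}` factors as `F = [X'(0); U']ᵀ M D`, where `M` is the block matrix
`[[G1, G2ᵀ], [G2, 0]]`. -/
theorem F_factorization
    (n m Nd Nd' : ℕ) (hN : Nd' ≤ Nd)
    (A : Matrix (Fin n) (Fin n) ℝ) (B : Matrix (Fin n) (Fin m) ℝ)
    (K : Matrix (Fin m) (Fin n) ℝ)
    (P Q : Matrix (Fin n) (Fin n) ℝ) (R : Matrix (Fin m) (Fin m) ℝ)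
    (hP : P.IsSymm) (hQ : Q.IsSymm) (hR : R.IsSymm)
    (x0 x1 : Fin Nd → Fin n → ℝ) (u : Fin Nd → Fin m → ℝ)
    (htrans : ∀ i : Fin Nd, x1 i = A *ᵥ x0 i + B *ᵥ u i)
    (hctrl : ∀ i : Fin Nd, (i : ℕ) < Nd' → u i = -(K *ᵥ x0 i))
    (F : Matrix (Fin Nd') (Fin Nd) ℝ)
    (hF : F = Matrix.of fun i j =>
      x1 (Fin.castLE hN i) ⬝ᵥ (P *ᵥ x1 j) +
        x0 (Fin.castLE hN i) ⬝ᵥ ((Q - P) *ᵥ x0 j) +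
        u (Fin.castLE hN i) ⬝ᵥ (R *ᵥ u j))
    (D : Matrix (Fin n ⊕ Fin m) (Fin Nd) ℝ)
    (hD : D = Matrix.of fun p j => Sum.elim (x0 j) (u j) p)
    (X0' : Matrix (Fin n) (Fin Nd') ℝ)
    (hX0' : X0' = Matrix.of fun k i => x0 (Fin.castLE hN i) k)
    (U' : Matrix (Fin m) (Fin Nd') ℝ)
    (hU' : U' = Matrix.of fun k i => u (Fin.castLE hN i) k)
    (G1 : Matrix (Fin n) (Fin n) ℝ) (G2 : Matrix (Fin m) (Fin n) ℝ)
    (hG1 : G1 = Aᵀ * P * A - P + Q - Kᵀ * (R + Bᵀ * P * B) * K)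
    (hG2 : G2 = Bᵀ * P * A - (R + Bᵀ * P * B) * K) :
    F = (Matrix.fromRows X0' U')ᵀ * Matrix.fromBlocks G1 G2ᵀ G2 0 * D :=
  F_factorization_general n m Nd Nd' hN A B K P Q R hP hR x0 x1 u htrans hctrl F hF D hD X0' hX0' U'
    hU' G1 G2 hG1 hG2
end
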